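/- Let L be an even lattice and ι ∈ O(L) an involution. Then the cardinality of the quotient group L/(L^ι ⊕ L^{-ι}) is at most 2^min(rank L^ι, rank L^{-ι}). -/

import Mathlib

private lemma finrank_int_eq_of_modules {M : Type*} [AddCommGroup M] (i1 i2 : Module ℤ M) :
    @Module.finrank ℤ M _ _ i1 = @Module.finrank ℤ M _ _ i2 := by
  letI : Unique (Module ℤ M) := AddCommGroup.uniqueIntModule
  rw [Subsingleton.elim i1 i2]

private lemma aux_card {L M : Type*} [AddCommGroup L] [Module ℤ L]
    [AddCommGroup M] [Module ℤ M] {n : ℕ} (b : Module.Basis (Fin n) ℤ M)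
    (S : Submodule ℤ L) (ψ : L →ₗ[ℤ] M)
    (hker : ∀ v : L, v ∈ S ↔ ∃ w : M, ψ v = w + w) :
    Nat.card (L ⧸ S) ≤ 2 ^ n := by
  classical
  let g : L →+ (Fin n → ZMod 2) :=
  { toFun := fun v i => ((b.repr (ψ v) i : ℤ) : ZMod 2)
    map_zero' := by funext i; simp
    map_add' := by intro x y; funext i; simp }
  have hg2 : ∀ v : L, v ∈ S ↔ g v = 0 := by
    intro v
    rw [hker v]
    constructor
    · rintro ⟨w, hw⟩
      funext i
      have hrep : b.repr (ψ v) i = 2 * b.repr w i := by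
        rw [hw, map_add, Finsupp.add_apply, two_mul]
      show ((b.repr (ψ v) i : ℤ) : ZMod 2) = 0
      exact (ZMod.intCast_zmod_eq_zero_iff_dvd _ 2).mpr ⟨b.repr w i, hrep⟩
    · intro h
      have h2 : ∀ i, (2:ℤ) ∣ b.repr (ψ v) i := by
        intro i
        have hi := congrFun h i
        simpa [g, ZMod.intCast_zmod_eq_zero_iff_dvd] using hi
      choose c hc using h2
      refine ⟨b.repr.symm (Finsupp.equivFunOnFinite.symm c), ?_⟩
      apply b.repr.injective
      rw [map_add, LinearEquiv.apply_symm_apply]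
      ext i
      rw [Finsupp.add_apply]
      show b.repr (ψ v) i = c i + c i
      rw [hc i, two_mul]
  have hSg : S.toAddSubgroup = g.ker := by
    ext v
    rw [Submodule.mem_toAddSubgroup, AddMonoidHom.mem_ker]
    exact hg2 v
  calc Nat.card (L ⧸ S) = Nat.card (L ⧸ g.ker) :=
        congrArg (fun N : AddSubgroup L => Nat.card (L ⧸ N)) hSg
    _ ≤ Nat.card (Fin n → ZMod 2) :=
        Nat.card_le_card_of_injective _ (QuotientAddGroup.kerLift_injective g)
    _ = 2 ^ n := by
        rw [Nat.card_pi]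
        simp [Nat.card_zmod]

/-- For an even lattice `L` with an isometric involution `ι`,
the quotient `L/(L^ι ⊕ L^{-ι})` has cardinality at most
`2^min(rank L^ι, rank L^{-ι})`. -/
theorem stmt_1 (L : Type*) [AddCommGroup L] [Module ℤ L]
    [Module.Free ℤ L] [Module.Finite ℤ L]
    (B : L →ₗ[ℤ] L →ₗ[ℤ] ℤ)
    (hsymm : ∀ v w : L, B v w = B w v)
    (heven : ∀ v : L, 2 ∣ B v v)
    (ι : L ≃ₗ[ℤ] L)
    (hinv : ∀ v : L, ι (ι v) = v)
    (hisom : ∀ v w : L, B (ι v) (ι w) = B v w) :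
    Nat.card (L ⧸ (LinearMap.ker (ι.toLinearMap - LinearMap.id) ⊔
        LinearMap.ker (ι.toLinearMap + LinearMap.id))) ≤
      2 ^ min (Module.finrank ℤ ↥(LinearMap.ker (ι.toLinearMap - LinearMap.id)))
        (Module.finrank ℤ ↥(LinearMap.ker (ι.toLinearMap + LinearMap.id))) := by
  classical
  set Kp := LinearMap.ker (ι.toLinearMap - LinearMap.id) with hKp
  set Km := LinearMap.ker (ι.toLinearMap + LinearMap.id) with hKm
  have memKp : ∀ x : L, x ∈ Kp ↔ ι x = x := by
    intro x
    simp [hKp, LinearMap.mem_ker, sub_eq_zero]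
  have memKm : ∀ x : L, x ∈ Km ↔ ι x = -x := by
    intro x
    simp [hKm, LinearMap.mem_ker, add_eq_zero_iff_eq_neg]
  obtain ⟨np, bp⟩ := Submodule.basisOfPid (Module.Free.chooseBasis ℤ L) Kp
  obtain ⟨nm, bm⟩ := Submodule.basisOfPid (Module.Free.chooseBasis ℤ L) Km
  have hmemp : ∀ v : L, (ι.toLinearMap + LinearMap.id : L →ₗ[ℤ] L) v ∈ Kp := by
    intro v
    rw [memKp]
    show ι (ι v + v) = ι v + v
    rw [map_add, hinv v]
    abel
  have hmemm : ∀ v : L, (LinearMap.id - ι.toLinearMap : L →ₗ[ℤ] L) v ∈ Km := by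
    intro v
    rw [memKm]
    show ι (v - ι v) = -(v - ι v)
    rw [map_sub, hinv v]
    abel
  set ψp := LinearMap.codRestrict Kp _ hmemp with hψp
  set ψm := LinearMap.codRestrict Km _ hmemm with hψm
  have hkerp : ∀ v : L, v ∈ Kp ⊔ Km ↔ ∃ w : Kp, ψp v = w + w := by
    intro v
    constructor
    · intro hv
      obtain ⟨a, ha, c, hc, rfl⟩ := Submodule.mem_sup.mp hv
      refine ⟨⟨a, ha⟩, ?_⟩
      apply Subtype.ext
      have h1 : ι a = a := (memKp a).mp ha
      have h2 : ι c = -c := (memKm c).mp hc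
      show ι (a + c) + (a + c) = a + a
      rw [map_add, h1, h2]
      abel
    · rintro ⟨⟨u, hu⟩, hw⟩
      have h1 : ι u = u := (memKp u).mp hu
      have hval : ι v + v = u + u := congrArg Subtype.val hw
      have hvm : v - u ∈ Km := by
        rw [memKm]
        have hι : ι v = u + u - v := by rw [← hval]; abel
        rw [map_sub, hι, h1]
        abel
      have hdecomp : v = u + (v - u) := by abel
      rw [hdecomp]
      exact Submodule.add_mem _ (Submodule.mem_sup_left hu) (Submodule.mem_sup_right hvm)
  have hkerm : ∀ v : L, v ∈ Kp ⊔ Km ↔ ∃ w : Km, ψm v = w + w := by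
    intro v
    constructor
    · intro hv
      obtain ⟨a, ha, c, hc, rfl⟩ := Submodule.mem_sup.mp hv
      refine ⟨⟨c, hc⟩, ?_⟩
      apply Subtype.ext
      have h1 : ι a = a := (memKp a).mp ha
      have h2 : ι c = -c := (memKm c).mp hc
      show (a + c) - ι (a + c) = c + c
      rw [map_add, h1, h2]
      abel
    · rintro ⟨⟨u, hu⟩, hw⟩
      have h2 : ι u = -u := (memKm u).mp hu
      have hval : v - ι v = u + u := congrArg Subtype.val hw
      have hvp : v - u ∈ Kp := by
        rw [memKp]
        have hι : ι v = v - (u + u) := by rw [← hval]; abel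
        rw [map_sub, hι, h2]
        abel
      have hdecomp : v = (v - u) + u := by abel
      rw [hdecomp]
      exact Submodule.add_mem _ (Submodule.mem_sup_left hvp) (Submodule.mem_sup_right hu)
  have h1 := @aux_card L ↥Kp _ _ _ Kp.module _ bp (Kp ⊔ Km) ψp hkerp
  have h2 := @aux_card L ↥Km _ _ _ Km.module _ bm (Kp ⊔ Km) ψm hkerm
  have hrp : Module.finrank ℤ ↥Kp = np :=
    (finrank_int_eq_of_modules _ Kp.module).trans
      (by letI := Kp.module
          exact (Module.finrank_eq_card_basis bp).trans (Fintype.card_fin np))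
  have hrm : Module.finrank ℤ ↥Km = nm :=
    (finrank_int_eq_of_modules _ Km.module).trans
      (by letI := Km.module
          exact (Module.finrank_eq_card_basis bm).trans (Fintype.card_fin nm))
  rw [hrp, hrm]
  rcases le_total np nm with h | h
  · rw [min_eq_left h]; exact h1
  · rw [min_eq_right h]; exact h2
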